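/- Discrete Green's representation formula: Let k ∈ ℂ and let 𝒢 : ℤ² → ℂ satisfy (Δ_d + k²)𝒢(x) = δ_{x,0} for all x ∈ ℤ². Let R ⊂ ℤ² be a finite region. Then for every function u : R → ℂ and every point x ∈ R̊, u(x) = Σ_{j=1}^{6} Σ_{y∈(∂R)_j} ( u(y)·(𝒢(x−y) − 𝒢(x−y+e_j)) − 𝒢(x−y)·(u(y) − u(y−e_j)) ) + Σ_{y∈R̊} 𝒢(x−y)·(Δ_d + k²)u(y). -/

import Mathlib

/-!
With `v y = 𝒢(x - y)` one has `(Δ_d + k²) v = δ_{·,x}` (the six directions come in opposite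
pairs), so `u(x) = Σ_{R̊} u · (Δ_d + k²) v`. Green's second identity turns
`Σ_{R̊} (u Δ_d v - v Δ_d u)` into a sum over directed edges `y → y + e_j` with `y ∈ R̊` of an
antisymmetric edge flux; edges with both ends in `R̊` cancel against their reverses, and the
remaining edges end exactly at the points of the boundary sides `(∂R)_j`.
-/

open Finset

/-- The six neighbour directions `e₁, e₂, e₃ = e₁ − e₂, e₄ = −e₁, e₅ = −e₂, e₆ = −e₃`. -/
def dir : Fin 6 → ℤ × ℤ := ![(1, 0), (0, 1), (1, -1), (-1, 0), (0, -1), (-1, 1)]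

/-- The 7-point discrete Laplacian of the triangular lattice on `ℤ²`:
`Δ_d u(x) = Σ_{j=1}^{6} u(x + e_j) − 6u(x)`. -/
noncomputable def discreteLaplacian (u : ℤ × ℤ → ℂ) (x : ℤ × ℤ) : ℂ :=
  (∑ j : Fin 6, u (x + dir j)) - 6 * u x

section EdgeSums

variable {ι A M : Type*} [Fintype ι] [AddCommGroup A] [DecidableEq A] [AddCommGroup M]
  (S : Finset A) (d : ι → A) (σ : ι → ι)

-- Each edge `y → y + d j` inside `S` cancels against its reverse `y + d j → y` in direction `σ j`.
theorem sum_sum_filter_add_mem_eq_zero (hσ : Function.Involutive σ)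
    (hdσ : ∀ j, d (σ j) = -d j) (hd : ∀ j, d j ≠ 0)
    (φ : ι → A → M) (hφ : ∀ j y, φ (σ j) (y + d j) = -φ j y) :
    ∑ j, ∑ y ∈ S with y + d j ∈ S, φ j y = 0 := by
  rw [← sum_finset_product' ((univ ×ˢ S).filter fun p => p.2 + d p.1 ∈ S) univ
    (fun j => S.filter fun y => y + d j ∈ S) (by simp)]
  refine sum_involution (fun p _ => (σ p.1, p.2 + d p.1)) (fun p _ => by simp [hφ])
    (fun p _ _ hp => hd p.1 ?_) (fun p hp => ?_) (fun p _ => by simp [hσ p.1, hdσ])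
  · simpa using congrArg Prod.snd hp
  · simp_all

theorem sum_sum_eq_sum_sum_filter_add_notMem (hσ : Function.Involutive σ)
    (hdσ : ∀ j, d (σ j) = -d j) (hd : ∀ j, d j ≠ 0)
    (φ : ι → A → M) (hφ : ∀ j y, φ (σ j) (y + d j) = -φ j y) :
    ∑ j, ∑ y ∈ S, φ j y = ∑ j, ∑ y ∈ S with y + d j ∉ S, φ j y := by
  rw [← zero_add (∑ j, ∑ y ∈ S with y + d j ∉ S, φ j y),
    ← sum_sum_filter_add_mem_eq_zero S d σ hσ hdσ hd φ hφ, ← sum_add_distrib]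
  exact sum_congr rfl fun j _ => (sum_filter_add_sum_filter_not S _ _).symm

variable {S} in
theorem sum_filter_add_notMem_eq_sum_filter_sub_mem {T : Finset A} (hST : Disjoint S T)
    {e : A} (hS : ∀ y ∈ S, y + e ∈ S ∪ T) (f : A → M) :
    ∑ y ∈ S with y + e ∉ S, f y = ∑ z ∈ T with z - e ∈ S, f (z - e) := by
  refine sum_nbij' (· + e) (· - e) (fun y hy => ?_) (fun z hz => ?_) (fun y _ => by simp)
    (fun z _ => by simp) (fun y _ => by simp)
  · simp only [mem_filter, add_sub_cancel_right] at hy ⊢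
    have := hS y hy.1
    grind
  · simp only [mem_filter, sub_add_cancel] at hz ⊢
    exact ⟨hz.2, disjoint_right.mp hST hz.1⟩

end EdgeSums

theorem dir_add_three : ∀ j : Fin 6, dir (j + 3) = -dir j := by decide

theorem dir_ne_zero : ∀ j : Fin 6, dir j ≠ 0 := by decide

theorem add_three_involutive : Function.Involutive (· + 3 : Fin 6 → Fin 6) := by
  intro j; fin_cases j <;> rfl

theorem discreteLaplacian_comp_sub (G : ℤ × ℤ → ℂ) (x y : ℤ × ℤ) :
    discreteLaplacian (fun y => G (x - y)) y = discreteLaplacian G (x - y) := by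
  unfold discreteLaplacian
  congr 1
  refine Fintype.sum_equiv (Equiv.addRight 3) _ _ fun j => ?_
  simp only [Equiv.coe_addRight, dir_add_three]
  congr 1
  abel

theorem mul_discreteLaplacian_sub_mul_discreteLaplacian (u v : ℤ × ℤ → ℂ) (y : ℤ × ℤ) :
    u y * discreteLaplacian v y - v y * discreteLaplacian u y =
      ∑ j, (u y * v (y + dir j) - v y * u (y + dir j)) := by
  rw [discreteLaplacian, discreteLaplacian, sum_sub_distrib, ← mul_sum, ← mul_sum]
  ring

theorem sum_mul_discreteLaplacian_sub_mul_discreteLaplacian {Rint Rbd : Finset (ℤ × ℤ)}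
    (hdisj : Disjoint Rint Rbd) (hinterior : ∀ x ∈ Rint, ∀ j : Fin 6, x + dir j ∈ Rint ∪ Rbd)
    (u v : ℤ × ℤ → ℂ) :
    ∑ y ∈ Rint, (u y * discreteLaplacian v y - v y * discreteLaplacian u y) =
      ∑ j, ∑ y ∈ Rbd with y - dir j ∈ Rint,
        (u y * (v y - v (y - dir j)) - v y * (u y - u (y - dir j))) := by
  set φ : Fin 6 → ℤ × ℤ → ℂ := fun j y => u y * v (y + dir j) - v y * u (y + dir j)
  have hφ : ∀ j y, φ (j + 3) (y + dir j) = -φ j y := fun j y => by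
    simp only [φ, dir_add_three, add_neg_cancel_right]
    ring
  calc ∑ y ∈ Rint, (u y * discreteLaplacian v y - v y * discreteLaplacian u y)
      = ∑ j, ∑ y ∈ Rint, φ j y := by
        simp only [mul_discreteLaplacian_sub_mul_discreteLaplacian]
        exact sum_comm
    _ = ∑ j, ∑ y ∈ Rint with y + dir j ∉ Rint, φ j y :=
        sum_sum_eq_sum_sum_filter_add_notMem Rint dir _ add_three_involutive dir_add_three
          dir_ne_zero φ hφ
    _ = ∑ j, ∑ y ∈ Rbd with y - dir j ∈ Rint, φ j (y - dir j) :=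
        sum_congr rfl fun j _ =>
          sum_filter_add_notMem_eq_sum_filter_sub_mem hdisj (hinterior · · j) (φ j)
    _ = _ := by
        simp only [φ, sub_add_cancel]
        congr! 2 with j y
        ring

theorem discrete_green_representation_general
    (k : ℂ) (G : ℤ × ℤ → ℂ)
    (hG : ∀ x : ℤ × ℤ, discreteLaplacian G x + k ^ 2 * G x = if x = (0, 0) then 1 else 0)
    (Rint Rbd : Finset (ℤ × ℤ))
    (hdisj : Disjoint Rint Rbd)
    (hinterior : ∀ x ∈ Rint, ∀ j : Fin 6, x + dir j ∈ Rint ∪ Rbd)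
    (u : ℤ × ℤ → ℂ) :
    ∀ x ∈ Rint,
      u x =
        (∑ j : Fin 6, ∑ y ∈ Rbd.filter (fun y => y - dir j ∈ Rint),
          (u y * (G (x - y) - G (x - y + dir j)) - G (x - y) * (u y - u (y - dir j)))) +
        ∑ y ∈ Rint, G (x - y) * (discreteLaplacian u y + k ^ 2 * u y) := by
  intro x hx
  have hv : ∀ y, discreteLaplacian (fun y => G (x - y)) y + k ^ 2 * G (x - y) =
      if y = x then 1 else 0 := fun y => by
    rw [discreteLaplacian_comp_sub, hG]
    exact if_congr (by rw [Prod.zero_eq_mk.symm, sub_eq_zero, eq_comm]) rfl rfl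
  have hux : u x =
      ∑ y ∈ Rint, u y * (discreteLaplacian (fun y => G (x - y)) y + k ^ 2 * G (x - y)) := by
    simp [hv, hx]
  have hshift : ∀ j y, G (x - (y - dir j)) = G (x - y + dir j) := fun j y => by
    rw [sub_sub_eq_add_sub, add_sub_right_comm]
  have hgreen :=
    sum_mul_discreteLaplacian_sub_mul_discreteLaplacian hdisj hinterior u (fun y => G (x - y))
  simp only [hshift] at hgreen
  rw [← hgreen, hux, ← sum_add_distrib]
  exact sum_congr rfl fun y _ => by ring

/-- Discrete Green's representation formula on a finite region `R = R̊ ∪ ∂R`. -/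
theorem discrete_green_representation
    (k : ℂ) (G : ℤ × ℤ → ℂ)
    (hG : ∀ x : ℤ × ℤ, discreteLaplacian G x + k ^ 2 * G x = if x = (0, 0) then 1 else 0)
    (Rint Rbd : Finset (ℤ × ℤ))
    (hdisj : Disjoint Rint Rbd)
    (hRint : Rint.Nonempty) (hRbd : Rbd.Nonempty)
    (hinterior : ∀ x ∈ Rint, ∀ j : Fin 6, x + dir j ∈ Rint ∪ Rbd)
    (hboundary : ∀ y ∈ Rbd, ∃ j : Fin 6, y - dir j ∈ Rint)
    (u : ℤ × ℤ → ℂ) :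
    ∀ x ∈ Rint,
      u x =
        (∑ j : Fin 6, ∑ y ∈ Rbd.filter (fun y => y - dir j ∈ Rint),
          (u y * (G (x - y) - G (x - y + dir j)) - G (x - y) * (u y - u (y - dir j)))) +
        ∑ y ∈ Rint, G (x - y) * (discreteLaplacian u y + k ^ 2 * u y) :=
  discrete_green_representation_general k G hG Rint Rbd hdisj hinterior u
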